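/- arXiv:2408.14022 — 3 statements merged into one kernel-verified Lean document; each statement's English description precedes it below -/
import Mathlib

section
/- The collection {S ⊆ V : G[S] is a locally h-clique densest subgraph of G} has cardinality at most |V|. -/
open Finset

variable {V : Type*} [Fintype V] [DecidableEq V]

/-- `Ψ_h(G[S])`: the set of `h`-cliques of `G` all of whose vertices lie in `S`
(equivalently, the `h`-cliques of the induced subgraph `G[S]`). -/
def cliquesIn (G : SimpleGraph V) [DecidableRel G.Adj] (h : ℕ) (S : Finset V) :
    Finset (Finset V) :=
  Finset.univ.filter fun c => G.IsNClique h c ∧ c ⊆ S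

/-- the `h`-clique density `d_h(G[S]) = |Ψ_h(G[S])| / |S|`. -/
noncomputable def cliqueDensity (G : SimpleGraph V) [DecidableRel G.Adj] (h : ℕ)
    (S : Finset V) : ℝ :=
  ((cliquesIn G h S).card : ℝ) / (S.card : ℝ)

/-- `G[S]` is `h`-clique `ρ`-compact: `S` is nonempty, the induced subgraph is
connected, and removing any nonempty `U ⊆ S` removes at least `ρ·|U|` `h`-cliques. -/
def IsCliqueCompact (G : SimpleGraph V) [DecidableRel G.Adj] (h : ℕ) (ρ : ℝ)
    (S : Finset V) : Prop :=
  S.Nonempty ∧ (G.induce (S : Set V)).Connected ∧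
    ∀ U ⊆ S, U.Nonempty →
      ρ * (U.card : ℝ) ≤ ((cliquesIn G h S).card : ℝ) - ((cliquesIn G h (S \ U)).card : ℝ)

/-- `G[S]` is a locally `h`-clique densest subgraph of `G`. -/
def IsLhCDS (G : SimpleGraph V) [DecidableRel G.Adj] (h : ℕ) (S : Finset V) : Prop :=
  IsCliqueCompact G h (cliqueDensity G h S) S ∧
    ¬ ∃ S' : Finset V, S ⊂ S' ∧ IsCliqueCompact G h (cliqueDensity G h S) S'

/-- the `h`-clique compact number `φ_h(u)` of a vertex `u`. -/
noncomputable def compactNumber (G : SimpleGraph V) [DecidableRel G.Adj] (h : ℕ)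
    (u : V) : ℝ :=
  sSup {ρ : ℝ | 0 ≤ ρ ∧ ∃ S : Finset V, u ∈ S ∧ IsCliqueCompact G h ρ S}

/-- `α` is a feasible solution to the convex program `CP(G,h)`: each `h`-clique
distributes a unit weight, nonnegatively, among its vertices. -/
def CPFeasible (G : SimpleGraph V) [DecidableRel G.Adj] (h : ℕ)
    (α : Finset V → V → ℝ) : Prop :=
  (∀ ψ ∈ cliquesIn G h Finset.univ, ∀ u ∈ ψ, 0 ≤ α ψ u) ∧
    (∀ ψ ∈ cliquesIn G h Finset.univ, ∑ u ∈ ψ, α ψ u = 1)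

/-- `r(u)`: the total weight received by vertex `u` under `α`. -/
def cpR (G : SimpleGraph V) [DecidableRel G.Adj] (h : ℕ) (α : Finset V → V → ℝ)
    (u : V) : ℝ :=
  ∑ ψ ∈ (cliquesIn G h Finset.univ).filter (fun ψ => u ∈ ψ), α ψ u

/-- `α` is an optimal solution to `CP(G,h)`: it is feasible and minimizes
`Σ_u r(u)²` over all feasible solutions. -/
def CPOptimal (G : SimpleGraph V) [DecidableRel G.Adj] (h : ℕ)
    (α : Finset V → V → ℝ) : Prop :=
  CPFeasible G h α ∧
    ∀ β : Finset V → V → ℝ, CPFeasible G h β →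
      ∑ u : V, (cpR G h α u) ^ 2 ≤ ∑ u : V, (cpR G h β u) ^ 2

/-!
Two LhCDSs that meet are nested: if `d_h(G[S]) ≤ d_h(G[T])`, then `G[S ∪ T]` is still
`d_h(G[S])`-compact (the cliques lost from `S ∪ T` when removing `U` include those lost from `S`
when removing `U ∩ S` and, disjointly, those lost from `T` when removing `U \ S`), so maximality of
`S` forces `T ⊆ S`. A proper nested pair is impossible too: removing `S \ T` from the
`d_h(G[S])`-compact `S` shows `d_h(G[T]) ≤ d_h(G[S])`, so `S` would be a `d_h(G[T])`-compact
proper superset of `T`. Hence distinct LhCDSs are disjoint, and there are at most `|V|` of them.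
-/

section

variable {G : SimpleGraph V} [DecidableRel G.Adj] {h : ℕ}

def cliquesMeeting (G : SimpleGraph V) [DecidableRel G.Adj] (h : ℕ) (S U : Finset V) :
    Finset (Finset V) :=
  (cliquesIn G h S).filter fun c => ¬ Disjoint c U

lemma cliquesIn_mono {S T : Finset V} (hST : S ⊆ T) : cliquesIn G h S ⊆ cliquesIn G h T :=
  monotone_filter_right _ fun _ _ => And.imp_right fun hcS => hcS.trans hST

lemma cliquesIn_sdiff (S U : Finset V) :
    cliquesIn G h (S \ U) = (cliquesIn G h S).filter fun c => Disjoint c U := by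
  ext c
  simp only [cliquesIn, mem_filter, mem_univ, true_and, subset_sdiff, and_assoc]

lemma card_cliquesIn_sub_card_cliquesIn_sdiff (S U : Finset V) :
    ((cliquesIn G h S).card : ℝ) - (cliquesIn G h (S \ U)).card =
      (cliquesMeeting G h S U).card := by
  rw [cliquesIn_sdiff, cliquesMeeting,
    ← card_filter_add_card_filter_not (s := cliquesIn G h S) (fun c => Disjoint c U)]
  push_cast
  ring

lemma card_cliquesMeeting_add_card_cliquesMeeting_le (S T U : Finset V) :
    (cliquesMeeting G h S (U ∩ S)).card + (cliquesMeeting G h T (U \ S)).card ≤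
      (cliquesMeeting G h (S ∪ T) U).card := by
  have hdisj : Disjoint (cliquesMeeting G h S (U ∩ S)) (cliquesMeeting G h T (U \ S)) := by
    refine disjoint_left.mpr fun c hcS hcT => ?_
    obtain ⟨x, hxc, hxU⟩ := not_disjoint_iff.mp (mem_filter.mp hcT).2
    exact (mem_sdiff.mp hxU).2 ((mem_filter.mp (mem_filter.mp hcS).1).2.2 hxc)
  rw [← card_union_of_disjoint hdisj]
  refine card_le_card fun c hc => ?_
  simp only [cliquesMeeting, mem_union, mem_filter] at hc ⊢
  rcases hc with ⟨hc, hcU⟩ | ⟨hc, hcU⟩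
  · exact ⟨cliquesIn_mono subset_union_left hc, fun hd => hcU (hd.mono_right inter_subset_left)⟩
  · exact ⟨cliquesIn_mono subset_union_right hc, fun hd => hcU (hd.mono_right sdiff_subset)⟩

lemma IsCliqueCompact.of_le {ρ ρ' : ℝ} {S : Finset V} (hS : IsCliqueCompact G h ρ S)
    (hρ : ρ' ≤ ρ) : IsCliqueCompact G h ρ' S :=
  ⟨hS.1, hS.2.1, fun U hU hUne =>
    (mul_le_mul_of_nonneg_right hρ U.card.cast_nonneg).trans (hS.2.2 U hU hUne)⟩

lemma IsCliqueCompact.mul_card_le {ρ : ℝ} {S U : Finset V} (hS : IsCliqueCompact G h ρ S)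
    (hU : U ⊆ S) :
    ρ * U.card ≤ ((cliquesIn G h S).card : ℝ) - (cliquesIn G h (S \ U)).card := by
  rcases U.eq_empty_or_nonempty with rfl | hUne
  · simp
  · exact hS.2.2 U hU hUne

lemma IsCliqueCompact.mul_card_le_card_cliquesMeeting {ρ : ℝ} {S U : Finset V}
    (hS : IsCliqueCompact G h ρ S) (hU : U ⊆ S) :
    ρ * U.card ≤ (cliquesMeeting G h S U).card := by
  rw [← card_cliquesIn_sub_card_cliquesIn_sdiff]
  exact hS.mul_card_le hU

lemma IsCliqueCompact.union {ρ ρ' : ℝ} {S T : Finset V} (hS : IsCliqueCompact G h ρ S)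
    (hT : IsCliqueCompact G h ρ' T) (hρ : ρ ≤ ρ') (hST : (S ∩ T).Nonempty) :
    IsCliqueCompact G h ρ (S ∪ T) := by
  refine ⟨hS.1.mono subset_union_left, ?_, fun U hU _ => ?_⟩
  · rw [coe_union]
    exact SimpleGraph.induce_union_connected hS.2.1.preconnected hT.2.1.preconnected
      (by rwa [← coe_inter, coe_nonempty])
  have hlostS := hS.mul_card_le_card_cliquesMeeting (inter_subset_right : U ∩ S ⊆ S)
  have hlostT : ρ * (U \ S).card ≤ (cliquesMeeting G h T (U \ S)).card := by
    refine (mul_le_mul_of_nonneg_right hρ (Nat.cast_nonneg _)).trans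
      (hT.mul_card_le_card_cliquesMeeting fun x hx => ?_)
    obtain ⟨hxU, hxS⟩ := mem_sdiff.mp hx
    exact (mem_union.mp (hU hxU)).resolve_left hxS
  have hlost : ((cliquesMeeting G h S (U ∩ S)).card : ℝ) + (cliquesMeeting G h T (U \ S)).card ≤
      (cliquesMeeting G h (S ∪ T) U).card := by
    exact_mod_cast card_cliquesMeeting_add_card_cliquesMeeting_le S T U
  have hcard : (U.card : ℝ) = (U ∩ S).card + (U \ S).card := by
    exact_mod_cast (card_inter_add_card_sdiff U S).symm
  rw [card_cliquesIn_sub_card_cliquesIn_sdiff, hcard]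
  linarith

lemma cliqueDensity_le_of_subset {S T : Finset V}
    (hS : IsCliqueCompact G h (cliqueDensity G h S) S) (hTS : T ⊆ S) :
    cliqueDensity G h T ≤ cliqueDensity G h S := by
  rcases T.eq_empty_or_nonempty with rfl | hT
  · simp only [cliqueDensity, card_empty, Nat.cast_zero, div_zero]
    positivity
  set ρ := cliqueDensity G h S
  have hlost := hS.mul_card_le (sdiff_subset : S \ T ⊆ S)
  have hcliquesS : ((cliquesIn G h S).card : ℝ) = ρ * S.card :=
    (div_mul_cancel₀ _ (Nat.cast_pos.mpr hS.1.card_pos).ne').symm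
  have hcardS : ((S \ T).card : ℝ) = S.card - T.card := by
    rw [card_sdiff_of_subset hTS, Nat.cast_sub (card_le_card hTS)]
  rw [Finset.sdiff_sdiff_eq_self hTS, hcliquesS, hcardS] at hlost
  rw [cliqueDensity, div_le_iff₀ (Nat.cast_pos.mpr hT.card_pos)]
  linarith

lemma IsLhCDS.eq_of_subset {S T : Finset V} (hS : IsLhCDS G h S) (hT : IsLhCDS G h T)
    (hTS : T ⊆ S) : T = S := by
  by_contra hne
  exact hT.2 ⟨S, ssubset_of_subset_of_ne hTS hne,
    hS.1.of_le (cliqueDensity_le_of_subset hS.1 hTS)⟩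

lemma IsLhCDS.subset_of_cliqueDensity_le {S T : Finset V} (hS : IsLhCDS G h S)
    (hT : IsLhCDS G h T) (hST : (S ∩ T).Nonempty)
    (hd : cliqueDensity G h S ≤ cliqueDensity G h T) : T ⊆ S := by
  by_contra hTS
  exact hS.2 ⟨S ∪ T, ssubset_of_subset_of_ne subset_union_left
    fun hS_eq => hTS (hS_eq ▸ subset_union_right), hS.1.union hT.1 hd hST⟩

lemma IsLhCDS.disjoint_of_ne {S T : Finset V} (hS : IsLhCDS G h S) (hT : IsLhCDS G h T)
    (hne : S ≠ T) : Disjoint S T := by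
  by_contra hST
  rw [not_disjoint_iff_nonempty_inter] at hST
  rcases le_total (cliqueDensity G h S) (cliqueDensity G h T) with hd | hd
  · exact hne (hS.eq_of_subset hT (hS.subset_of_cliqueDensity_le hT hST hd)).symm
  · exact hne (hT.eq_of_subset hS (hT.subset_of_cliqueDensity_le hS (inter_comm S T ▸ hST) hd))

end

theorem stmt_3_general (G : SimpleGraph V) [DecidableRel G.Adj] (h : ℕ) :
    {S : Finset V | IsLhCDS G h S}.ncard ≤ Fintype.card V := by
  classical
  set lhcds := univ.filter fun S => IsLhCDS G h S
  have hpairwise : (lhcds : Set (Finset V)).PairwiseDisjoint id := fun S hS T hT hne =>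
    (mem_filter.mp hS).2.disjoint_of_ne (mem_filter.mp hT).2 hne
  calc {S : Finset V | IsLhCDS G h S}.ncard = lhcds.card := by
        simp [lhcds, ← Set.ncard_coe_finset]
    _ ≤ (lhcds.biUnion id).card :=
        card_le_card_biUnion hpairwise fun S hS => (mem_filter.mp hS).2.1.1
    _ ≤ Fintype.card V := card_le_univ _

/-- The collection of vertex sets of locally `h`-clique densest
subgraphs of `G` has cardinality at most `|V|`. -/
theorem stmt_3 (G : SimpleGraph V) [DecidableRel G.Adj] (h : ℕ) (hh : 2 ≤ h) :
    {S : Finset V | IsLhCDS G h S}.ncard ≤ Fintype.card V :=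
  stmt_3_general G h
end

section
/- If (u, v) ∈ E is an edge with φ_h(u) > φ_h(v), then v is not contained in any locally h-clique densest subgraph of G, i.e., there is no LhCDS G[S] of G with v ∈ S. -/
/-!
Let `S` be an LhCDS containing `v` and `ρ = d_h(S)`. Then `ρ ≤ φ_h(v) < φ_h(u)`, so some
`T ∋ u` is `ρ'`-compact for a `ρ' > ρ`. If `T ⊆ S`, compactness of `S` at its own density gives
`d_h(T) ≤ ρ`, while removing all of `T` gives `d_h(T) ≥ ρ'`. Otherwise, since the number of
cliques inside a set is supermodular and `u ~ v`, `S ∪ T` is `ρ`-compact and strictly larger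
than `S`, against the maximality of `S`.
-/

open Finset

variable {V : Type*} [Fintype V] [DecidableEq V]

section CliqueCount

variable {G : SimpleGraph V} [DecidableRel G.Adj] {h : ℕ}

lemma mem_cliquesIn {S c : Finset V} : c ∈ cliquesIn G h S ↔ G.IsNClique h c ∧ c ⊆ S := by
  simp [cliquesIn]

lemma cliquesIn_empty (hh : h ≠ 0) : cliquesIn G h (∅ : Finset V) = ∅ := by
  ext c
  simp only [mem_cliquesIn, Finset.subset_empty, Finset.notMem_empty, iff_false, not_and]
  rintro hc rfl
  exact hh (by simpa using hc.card_eq.symm)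

lemma cliquesIn_inter (S T : Finset V) :
    cliquesIn G h (S ∩ T) = cliquesIn G h S ∩ cliquesIn G h T := by
  ext c
  simp only [Finset.mem_inter, mem_cliquesIn, Finset.subset_inter_iff]
  tauto

lemma card_cliquesIn_add_card_cliquesIn_le (S T : Finset V) :
    #(cliquesIn G h S) + #(cliquesIn G h T) ≤
      #(cliquesIn G h (S ∪ T)) + #(cliquesIn G h (S ∩ T)) := by
  rw [← Finset.card_union_add_card_inter, cliquesIn_inter]
  gcongr
  exact Finset.union_subset (cliquesIn_mono Finset.subset_union_left)
    (cliquesIn_mono Finset.subset_union_right)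

end CliqueCount

lemma cliqueDensity_nonneg (G : SimpleGraph V) [DecidableRel G.Adj] (h : ℕ) (S : Finset V) :
    0 ≤ cliqueDensity G h S := by
  unfold cliqueDensity
  positivity

namespace IsCliqueCompact

variable {G : SimpleGraph V} [DecidableRel G.Adj] {h : ℕ} {ρ : ℝ} {S T : Finset V}

lemma removal_bound (hS : IsCliqueCompact G h ρ S) {U : Finset V} (hU : U ⊆ S) :
    ρ * #U ≤ #(cliquesIn G h S) - #(cliquesIn G h (S \ U)) := by
  rcases U.eq_empty_or_nonempty with rfl | hUne
  · simp
  · exact hS.2.2 U hU hUne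

lemma anti {ρ' : ℝ} (hρ : ρ ≤ ρ') (hS : IsCliqueCompact G h ρ' S) : IsCliqueCompact G h ρ S :=
  ⟨hS.1, hS.2.1, fun U hU hUne =>
    (mul_le_mul_of_nonneg_right hρ (Nat.cast_nonneg _)).trans (hS.2.2 U hU hUne)⟩

lemma le_cliqueDensity (hh : h ≠ 0) (hS : IsCliqueCompact G h ρ S) :
    ρ ≤ cliqueDensity G h S := by
  have hcard : (0 : ℝ) < #S := by exact_mod_cast hS.1.card_pos
  have hremove := hS.removal_bound (Finset.Subset.refl S)
  rw [Finset.sdiff_self, cliquesIn_empty hh, Finset.card_empty, Nat.cast_zero, sub_zero] at hremove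
  exact (le_div_iff₀ hcard).2 hremove

lemma cliqueDensity_le (hS : IsCliqueCompact G h (cliqueDensity G h S) S) (hTS : T ⊆ S)
    (hT : T.Nonempty) : cliqueDensity G h T ≤ cliqueDensity G h S := by
  have hScard : (0 : ℝ) < #S := by exact_mod_cast hS.1.card_pos
  have hTcard : (0 : ℝ) < #T := by exact_mod_cast hT.card_pos
  have hremove := hS.removal_bound (Finset.sdiff_subset (s := S) (t := T))
  rw [Finset.sdiff_sdiff_eq_self hTS, Finset.cast_card_sdiff hTS] at hremove
  have hdens : cliqueDensity G h S * #S = #(cliquesIn G h S) := div_mul_cancel₀ _ hScard.ne'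
  rw [cliqueDensity, div_le_iff₀ hTcard]
  linarith

/-- Removing `U` from `S ∪ T` destroys at least the cliques of `T` destroyed by `U ∩ T` plus
those of `S` destroyed by `U \ T`; both bounds are instances of the supermodularity
`card_cliquesIn_add_card_cliquesIn_le`. -/
lemma union_s13 {a b : V} (hS : IsCliqueCompact G h ρ S) (hT : IsCliqueCompact G h ρ T)
    (ha : a ∈ S) (hb : b ∈ T) (hab : G.Adj a b) : IsCliqueCompact G h ρ (S ∪ T) := by
  refine ⟨hS.1.mono Finset.subset_union_left, ?_, fun U hU _ => ?_⟩
  · rw [Finset.coe_union]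
    exact SimpleGraph.connected_induce_union hS.2.1.preconnected hT.2.1.preconnected ha hb hab
  have hcardU : (#(U \ T) : ℝ) + #(U ∩ T) = #U := by
    exact_mod_cast Finset.card_sdiff_add_card_inter U T
  have hremoveS := hS.removal_bound (U := U \ T)
    (sdiff_le_iff.2 (hU.trans (Finset.union_comm S T).le))
  have hremoveT := hT.removal_bound (U := U ∩ T) Finset.inter_subset_right
  have hsuperS := card_cliquesIn_add_card_cliquesIn_le (G := G) (h := h) S ((S \ (U \ T)) ∪ T)
  have hsuperT := card_cliquesIn_add_card_cliquesIn_le (G := G) (h := h) T ((S ∪ T) \ U)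
  rw [show S ∪ ((S \ (U \ T)) ∪ T) = S ∪ T by grind,
    show S ∩ ((S \ (U \ T)) ∪ T) = S \ (U \ T) by grind] at hsuperS
  rw [show T ∪ ((S ∪ T) \ U) = (S \ (U \ T)) ∪ T by grind,
    show T ∩ ((S ∪ T) \ U) = T \ (U ∩ T) by grind] at hsuperT
  rify at hsuperS hsuperT
  rw [← hcardU, mul_add]
  linarith

end IsCliqueCompact

section CompactNumber

variable {G : SimpleGraph V} [DecidableRel G.Adj] {h : ℕ}

lemma bddAbove_compactNumberSet (u : V) :
    BddAbove {ρ : ℝ | 0 ≤ ρ ∧ ∃ S : Finset V, u ∈ S ∧ IsCliqueCompact G h ρ S} := by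
  refine ⟨#(cliquesIn G h Finset.univ), ?_⟩
  rintro ρ ⟨-, S, -, hS⟩
  obtain ⟨x, hx⟩ := hS.1
  have hremove := hS.removal_bound (Finset.singleton_subset_iff.2 hx)
  have hmono : (#(cliquesIn G h S) : ℝ) ≤ #(cliquesIn G h Finset.univ) := by
    exact_mod_cast Finset.card_le_card (cliquesIn_mono (Finset.subset_univ S))
  simp only [Finset.card_singleton, Nat.cast_one, mul_one] at hremove
  linarith [(#(cliquesIn G h (S \ {x}))).cast_nonneg (α := ℝ)]

lemma le_compactNumber {u : V} {ρ : ℝ} {S : Finset V} (hρ : 0 ≤ ρ) (hu : u ∈ S)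
    (hS : IsCliqueCompact G h ρ S) : ρ ≤ compactNumber G h u :=
  le_csSup (bddAbove_compactNumberSet u) ⟨hρ, S, hu, hS⟩

lemma exists_isCliqueCompact_of_lt_compactNumber {u : V} {ρ : ℝ} (hρ : 0 ≤ ρ)
    (hlt : ρ < compactNumber G h u) :
    ∃ ρ' > ρ, ∃ T : Finset V, u ∈ T ∧ IsCliqueCompact G h ρ' T := by
  have hne : {ρ : ℝ | 0 ≤ ρ ∧ ∃ S : Finset V, u ∈ S ∧ IsCliqueCompact G h ρ S}.Nonempty := by
    by_contra hempty
    rw [Set.not_nonempty_iff_eq_empty] at hempty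
    rw [compactNumber, hempty, Real.sSup_empty] at hlt
    linarith
  obtain ⟨ρ', ⟨-, hT⟩, hρ'⟩ := exists_lt_of_lt_csSup hne hlt
  exact ⟨ρ', hρ', hT⟩

end CompactNumber

/-- If `(u,v) ∈ E` and `φ_h(u) > φ_h(v)`, then `v` belongs to no
locally `h`-clique densest subgraph of `G`. -/
theorem stmt_13 (G : SimpleGraph V) [DecidableRel G.Adj] (h : ℕ) (hh : 2 ≤ h)
    (u v : V) (hadj : G.Adj u v)
    (hlt : compactNumber G h v < compactNumber G h u) :
    ¬ ∃ S : Finset V, IsLhCDS G h S ∧ v ∈ S := by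
  rintro ⟨S, ⟨hS, hmax⟩, hvS⟩
  have hρ := cliqueDensity_nonneg G h S
  obtain ⟨ρ', hρ', T, huT, hT⟩ := exists_isCliqueCompact_of_lt_compactNumber hρ
    ((le_compactNumber hρ hvS hS).trans_lt hlt)
  by_cases hTS : T ⊆ S
  · have hdens := (hT.le_cliqueDensity (by omega)).trans (hS.cliqueDensity_le hTS hT.1)
    linarith
  · exact hmax ⟨S ∪ T, left_lt_sup.2 hTS,
      hS.union_s13 (hT.anti hρ'.le) hvS huT hadj.symm⟩
end

section
/- Let W ⊆ V be a set of vertices none of which belongs to any locally h-clique densest subgraph of G, and let G' = G[V ∖ W] be the induced subgraph on the remaining vertices. Then for every vertex v that belongs to some locally h-clique densest subgraph of G, the h-clique compact number of v computed in G' equals the h-clique compact number of v computed in G, i.e., φ_h^{G'}(v) = φ_h^{G}(v). -/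
open Finset

variable {V : Type*} [Fintype V] [DecidableEq V]

/-- the `h`-clique compact number of `u` computed in the induced subgraph `G[A]`:
the sets `S` are restricted to `A`. (Cliques within `S ⊆ A` and connectivity of
the subgraph induced on `S` are the same in `G[A]` as in `G`, so this is the
compact number of `u` in the induced subgraph `G[A]`; taking `A = univ` recovers
the compact number in `G`.) -/
noncomputable def compactNumberIn (G : SimpleGraph V) [DecidableRel G.Adj]
    (h : ℕ) (A : Finset V) (u : V) : ℝ :=
  sSup {ρ : ℝ | 0 ≤ ρ ∧ ∃ S : Finset V, S ⊆ A ∧ u ∈ S ∧ IsCliqueCompact G h ρ S}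


section Aux
variable {V : Type*} [Fintype V] [DecidableEq V]

lemma cliquesIn_mono_s14 (G : SimpleGraph V) [DecidableRel G.Adj] (h : ℕ) {A B : Finset V}
    (hAB : A ⊆ B) : cliquesIn G h A ⊆ cliquesIn G h B := by
  intro c hc
  simp only [cliquesIn, Finset.mem_filter] at *
  exact ⟨hc.1, hc.2.1, hc.2.2.trans hAB⟩

lemma destroyed_mono (G : SimpleGraph V) [DecidableRel G.Adj] (h : ℕ) {A B U : Finset V}
    (hAB : A ⊆ B) :
    ((cliquesIn G h A).card : ℝ) - ((cliquesIn G h (A \ U)).card : ℝ) ≤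
    ((cliquesIn G h B).card : ℝ) - ((cliquesIn G h (B \ U)).card : ℝ) := by
  have hA : cliquesIn G h (A \ U) ⊆ cliquesIn G h A :=
    cliquesIn_mono_s14 G h (Finset.sdiff_subset)
  have hB : cliquesIn G h (B \ U) ⊆ cliquesIn G h B :=
    cliquesIn_mono_s14 G h (Finset.sdiff_subset)
  have hsub : cliquesIn G h A \ cliquesIn G h (A \ U) ⊆
      cliquesIn G h B \ cliquesIn G h (B \ U) := by
    intro c hc
    rw [Finset.mem_sdiff] at hc ⊢
    obtain ⟨hc1, hc2⟩ := hc
    refine ⟨cliquesIn_mono_s14 G h hAB hc1, fun hcB => hc2 ?_⟩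
    simp only [cliquesIn, Finset.mem_filter] at hc1 hcB ⊢
    refine ⟨hc1.1, hc1.2.1, fun x hx => ?_⟩
    have hxA := hc1.2.2 hx
    have hxBU := hcB.2.2 hx
    rw [Finset.mem_sdiff] at hxBU ⊢
    exact ⟨hxA, hxBU.2⟩
  have e1 : ((cliquesIn G h A).card : ℝ) - ((cliquesIn G h (A \ U)).card : ℝ)
      = ((cliquesIn G h A \ cliquesIn G h (A \ U)).card : ℝ) := by
    rw [Finset.card_sdiff_of_subset hA, Nat.cast_sub (Finset.card_le_card hA)]
  have e2 : ((cliquesIn G h B).card : ℝ) - ((cliquesIn G h (B \ U)).card : ℝ)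
      = ((cliquesIn G h B \ cliquesIn G h (B \ U)).card : ℝ) := by
    rw [Finset.card_sdiff_of_subset hB, Nat.cast_sub (Finset.card_le_card hB)]
  rw [e1, e2]
  exact_mod_cast Finset.card_le_card hsub

lemma reach_mono (G : SimpleGraph V) {s t : Set V} (hst : s ⊆ t) {x y : V}
    (hx : x ∈ s) (hy : y ∈ s)
    (hr : (G.induce s).Reachable ⟨x, hx⟩ ⟨y, hy⟩) :
    (G.induce t).Reachable ⟨x, hst hx⟩ ⟨y, hst hy⟩ :=
  hr.map (G.induceHomOfLE hst).toHom

lemma connected_union (G : SimpleGraph V) {A B : Finset V}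
    (hA : (G.induce (A : Set V)).Connected) (hB : (G.induce (B : Set V)).Connected)
    (hAB : (A ∩ B).Nonempty) :
    (G.induce ((A ∪ B : Finset V) : Set V)).Connected := by
  obtain ⟨v, hv⟩ := hAB
  rw [Finset.mem_inter] at hv
  obtain ⟨hvA, hvB⟩ := hv
  have hsA : (A : Set V) ⊆ ((A ∪ B : Finset V) : Set V) := by
    intro x hx; simp only [Finset.coe_union, Set.mem_union]; exact Or.inl hx
  have hsB : (B : Set V) ⊆ ((A ∪ B : Finset V) : Set V) := by
    intro x hx; simp only [Finset.coe_union, Set.mem_union]; exact Or.inr hx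
  have hvU : (v : V) ∈ ((A ∪ B : Finset V) : Set V) := hsA hvA
  have key : ∀ z : ((A ∪ B : Finset V) : Set V),
      (G.induce ((A ∪ B : Finset V) : Set V)).Reachable z ⟨v, hvU⟩ := by
    rintro ⟨z, hz⟩
    have hz' : z ∈ A ∪ B := by exact_mod_cast hz
    rw [Finset.mem_union] at hz'
    rcases hz' with hzA | hzB
    · exact reach_mono G hsA hzA hvA (hA.preconnected ⟨z, hzA⟩ ⟨v, hvA⟩)
    · exact reach_mono G hsB hzB hvB (hB.preconnected ⟨z, hzB⟩ ⟨v, hvB⟩)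
  haveI : Nonempty (((A ∪ B : Finset V) : Set V)) := ⟨⟨v, hvU⟩⟩
  exact ⟨fun x y => (key x).trans (key y).symm⟩

lemma compact_weaken {G : SimpleGraph V} [DecidableRel G.Adj] {h : ℕ} {ρ ρ' : ℝ}
    {S : Finset V} (hle : ρ' ≤ ρ) (hS : IsCliqueCompact G h ρ S) :
    IsCliqueCompact G h ρ' S := by
  refine ⟨hS.1, hS.2.1, fun U hU hUne => ?_⟩
  calc ρ' * (U.card : ℝ) ≤ ρ * (U.card : ℝ) :=
        mul_le_mul_of_nonneg_right hle (Nat.cast_nonneg _)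
    _ ≤ _ := hS.2.2 U hU hUne

lemma compact_union {G : SimpleGraph V} [DecidableRel G.Adj] {h : ℕ} {ρa ρb : ℝ}
    {A B : Finset V} (hA : IsCliqueCompact G h ρa A) (hB : IsCliqueCompact G h ρb B)
    (hne : (A ∩ B).Nonempty) (hba : ρb ≤ ρa) :
    IsCliqueCompact G h ρb (A ∪ B) := by
  obtain ⟨w, hw⟩ := hne
  refine ⟨⟨w, Finset.mem_union_left _ (Finset.mem_inter.mp hw).1⟩,
    connected_union G hA.2.1 hB.2.1 ⟨w, hw⟩, fun U hU hUne => ?_⟩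
  set U1 : Finset V := U \ B with hU1def
  set U2 : Finset V := U ∩ B with hU2def
  have hU1A : U1 ⊆ A := by
    intro x hx
    rw [hU1def, Finset.mem_sdiff] at hx
    have := hU hx.1
    rw [Finset.mem_union] at this
    exact this.resolve_right hx.2
  have hU2B : U2 ⊆ B := Finset.inter_subset_right
  have hcard : (U.card : ℝ) = (U1.card : ℝ) + (U2.card : ℝ) := by
    rw [hU1def, hU2def]
    exact_mod_cast (Finset.card_sdiff_add_card_inter U B).symm
  -- step 1 : removing U1 from A ∪ B
  have step1 : ρa * (U1.card : ℝ) ≤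
      ((cliquesIn G h (A ∪ B)).card : ℝ) - ((cliquesIn G h ((A ∪ B) \ U1)).card : ℝ) := by
    rcases U1.eq_empty_or_nonempty with hE | hNE
    · rw [hE]
      simp only [Finset.card_empty, Nat.cast_zero, mul_zero, Finset.sdiff_empty, sub_self,
        le_refl]
    · exact le_trans (hA.2.2 U1 hU1A hNE) (destroyed_mono G h Finset.subset_union_left)
  -- step 2 : removing U2 from (A ∪ B) \ U1
  have hBsub : B ⊆ (A ∪ B) \ U1 := by
    intro x hx
    rw [Finset.mem_sdiff]
    refine ⟨Finset.mem_union_right _ hx, fun hxU1 => ?_⟩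
    rw [hU1def, Finset.mem_sdiff] at hxU1
    exact hxU1.2 hx
  have step2 : ρb * (U2.card : ℝ) ≤
      ((cliquesIn G h ((A ∪ B) \ U1)).card : ℝ) -
        ((cliquesIn G h (((A ∪ B) \ U1) \ U2)).card : ℝ) := by
    rcases U2.eq_empty_or_nonempty with hE | hNE
    · rw [hE]
      simp only [Finset.card_empty, Nat.cast_zero, mul_zero, Finset.sdiff_empty, sub_self,
        le_refl]
    · exact le_trans (hB.2.2 U2 hU2B hNE) (destroyed_mono G h hBsub)
  have hsplit : ((A ∪ B) \ U1) \ U2 = (A ∪ B) \ U := by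
    rw [hU1def, hU2def]
    ext x
    simp only [Finset.mem_sdiff, Finset.mem_inter, Finset.mem_union]
    tauto
  rw [hsplit] at step2
  have hb1 : ρb * (U1.card : ℝ) ≤ ρa * (U1.card : ℝ) :=
    mul_le_mul_of_nonneg_right hba (Nat.cast_nonneg _)
  calc ρb * (U.card : ℝ) = ρb * (U1.card : ℝ) + ρb * (U2.card : ℝ) := by
        rw [hcard]; ring
    _ ≤ (((cliquesIn G h (A ∪ B)).card : ℝ) - ((cliquesIn G h ((A ∪ B) \ U1)).card : ℝ))
        + (((cliquesIn G h ((A ∪ B) \ U1)).card : ℝ) -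
            ((cliquesIn G h ((A ∪ B) \ U)).card : ℝ)) :=
        add_le_add (hb1.trans step1) step2
    _ = _ := by ring

end Aux

/-- If `W` contains no vertex of any LhCDS of `G` and
`G' = G[V ∖ W]`, then every vertex `v` belonging to some LhCDS of `G` satisfies
`φ_h^{G'}(v) = φ_h^{G}(v)`. -/
theorem stmt_14 (G : SimpleGraph V) [DecidableRel G.Adj] (h : ℕ) (hh : 2 ≤ h)
    (W : Finset V)
    (hW : ∀ w ∈ W, ¬ ∃ S : Finset V, IsLhCDS G h S ∧ w ∈ S)
    (v : V) (hv : ∃ S : Finset V, IsLhCDS G h S ∧ v ∈ S) :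
    compactNumberIn G h (Finset.univ \ W) v = compactNumberIn G h Finset.univ v := by
  unfold compactNumberIn
  congr 1
  ext ρ
  simp only [Set.mem_setOf_eq]
  constructor
  · rintro ⟨hρ0, S, _, hvS, hc⟩
    exact ⟨hρ0, S, Finset.subset_univ S, hvS, hc⟩
  · rintro ⟨hρ0, S, _, hvS, hc⟩
    obtain ⟨T, hT, hvT⟩ := hv
    have hTW : T ⊆ Finset.univ \ W := by
      intro x hx
      rw [Finset.mem_sdiff]
      exact ⟨Finset.mem_univ x, fun hxW => hW x hxW ⟨T, hT, hx⟩⟩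
    by_cases hle : ρ ≤ cliqueDensity G h T
    · exact ⟨hρ0, T, hTW, hvT, compact_weaken hle hT.1⟩
    · push_neg at hle
      have hne : (S ∩ T).Nonempty := ⟨v, Finset.mem_inter.mpr ⟨hvS, hvT⟩⟩
      have hu : IsCliqueCompact G h (cliqueDensity G h T) (S ∪ T) :=
        compact_union hc hT.1 hne hle.le
      have hTsub : T ⊆ S ∪ T := Finset.subset_union_right
      have heq : S ∪ T = T := by
        by_contra hnex
        exact hT.2 ⟨S ∪ T, Finset.ssubset_iff_subset_ne.mpr ⟨hTsub, Ne.symm hnex⟩, hu⟩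
      have hST : S ⊆ T := by
        intro x hx
        rw [← heq]
        exact Finset.mem_union_left _ hx
      exact ⟨hρ0, S, hST.trans hTW, hvS, hc⟩
end
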